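/- arXiv:2112.13138 — 5 statements merged into one kernel-verified Lean document; each statement's English description precedes it below -/
import Mathlib

section
/- Let V be a finite nonempty set, c: V → ℝ, p: V → ℝ with p(v) ≥ 0 for all v ∈ V, L(λ) = min_{v ∈ V}(c(v) + λ p(v)), and Q = min{ c(v) : v ∈ V, p(v) = 0 } (with Q = +∞ if no such v exists). If Q < +∞, then there exists a finite λ̄ ≥ 0 such that L(λ) = Q for all λ ≥ λ̄; in particular sup_{λ ≥ 0} L(λ) = Q. -/
/-!
For large multipliers `λ` the Lagrangian `min_v (c v + λ p v)` equals the constrained minimum `Q`: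
zero-penalty points contribute at least `Q`, and a point with `p v > 0` contributes at least `Q` as
soon as `λ ≥ (Q - c v) / p v`, a condition that only finitely many thresholds impose.
-/

theorem le_add_mul_of_div_le {a c p lam : ℝ} (hp : 0 ≤ p) (hc : p = 0 → a ≤ c)
    (hlam : (a - c) / p ≤ lam) : a ≤ c + lam * p := by
  rcases hp.eq_or_lt with hp₀ | hp₀
  · simpa [← hp₀] using hc hp₀.symm
  · linarith [(div_le_iff₀ hp₀).mp hlam]

section LagrangianDuality

variable {ι : Type*} [Finite ι] {c p : ι → ℝ}

theorem ciInf_add_mul_le_of_eq_zero {v₀ : ι} (hv₀ : p v₀ = 0) (lam : ℝ) :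
    ⨅ v, (c v + lam * p v) ≤ c v₀ := by
  simpa [hv₀] using ciInf_le (Set.finite_range fun v => c v + lam * p v).bddBelow v₀

theorem exists_forall_le_add_mul (hp : ∀ v, 0 ≤ p v) {a : ℝ} (hc : ∀ v, p v = 0 → a ≤ c v) :
    ∃ lbar : ℝ, 0 ≤ lbar ∧ ∀ lam, lbar ≤ lam → ∀ v, a ≤ c v + lam * p v := by
  obtain ⟨M, hM⟩ := (Set.finite_range fun v => (a - c v) / p v).bddAbove
  refine ⟨max 0 M, le_max_left _ _, fun lam hlam v => ?_⟩
  have hMv : (a - c v) / p v ≤ M := hM ⟨v, rfl⟩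
  exact le_add_mul_of_div_le (hp v) (hc v) (hMv.trans ((le_max_right _ _).trans hlam))

theorem exists_forall_ciInf_add_mul_eq [Nonempty ι] (hp : ∀ v, 0 ≤ p v) {Q : ℝ}
    (hQ : IsLeast {r : ℝ | ∃ v, p v = 0 ∧ r = c v} Q) :
    ∃ lbar : ℝ, 0 ≤ lbar ∧ ∀ lam, lbar ≤ lam → ⨅ v, (c v + lam * p v) = Q := by
  obtain ⟨⟨v₀, hv₀, rfl⟩, hQ_le⟩ := hQ
  obtain ⟨lbar, hlbar₀, hlbar⟩ :=
    exists_forall_le_add_mul hp fun v hv => hQ_le ⟨v, hv, rfl⟩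
  exact ⟨lbar, hlbar₀, fun lam hlam =>
    (ciInf_add_mul_le_of_eq_zero hv₀ lam).antisymm (le_ciInf (hlbar lam hlam))⟩

end LagrangianDuality

theorem stmt_8 {V : Type} [Fintype V] [Nonempty V] (c p : V → ℝ)
    (hp : ∀ v, 0 ≤ p v)
    (Q : ℝ) (hQ : IsLeast {r : ℝ | ∃ v, p v = 0 ∧ r = c v} Q) :
    (∃ lbar : ℝ, 0 ≤ lbar ∧ ∀ lam : ℝ, lbar ≤ lam →
        (⨅ v, (c v + lam * p v)) = Q) ∧
    IsLUB {r : ℝ | ∃ lam : ℝ, 0 ≤ lam ∧ r = ⨅ v, (c v + lam * p v)} Q := by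
  obtain ⟨lbar, hlbar₀, hlbar⟩ := exists_forall_ciInf_add_mul_eq hp hQ
  refine ⟨⟨lbar, hlbar₀, hlbar⟩, IsGreatest.isLUB ⟨⟨lbar, hlbar₀, (hlbar lbar le_rfl).symm⟩, ?_⟩⟩
  obtain ⟨⟨v₀, hv₀, rfl⟩, -⟩ := hQ
  rintro r ⟨lam, -, rfl⟩
  exact ciInf_add_mul_le_of_eq_zero hv₀ lam
end

section
/- Let V be a finite nonempty set, c: V → ℝ, p: V → ℝ with p(v) ≥ 0, L(λ) = min_{v ∈ V}(c(v) + λ p(v)), and suppose Q := min{c(v) : v ∈ V, p(v) = 0} is finite. If additionally p(v) ≥ 1 for every v ∈ V with p(v) > 0, then for every λ ≥ Q − min_{v ∈ V} c(v), one has L(λ) = Q. -/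
/-!
Let `m = min c`. For `v` with `p v = 0` the penalized cost is `c v ≥ Q`; for `p v > 0`
integrality gives `p v ≥ 1`, and `λ ≥ Q - m ≥ 0`, so `c v + λ p v ≥ m + λ ≥ Q`. Hence every
penalized cost is at least `Q`, and the minimizer of `c` on `{p = 0}` attains `Q`.
-/

theorem le_add_mul_of_penalty_zero_or_one_le {R : Type*} [Semiring R] [PartialOrder R]
    [IsOrderedRing R] {c p lam m Q : R} (hp : 0 ≤ p) (hp1 : 0 < p → 1 ≤ p) (hlam : 0 ≤ lam)
    (hmc : m ≤ c) (hQ : Q ≤ m + lam) (hzero : p = 0 → Q ≤ c) :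
    Q ≤ c + lam * p := by
  rcases hp.eq_or_lt with hp0 | hpos
  · simpa [← hp0] using hzero hp0.symm
  · calc Q ≤ m + lam := hQ
      _ ≤ c + lam * 1 := by rw [mul_one]; gcongr
      _ ≤ c + lam * p := by gcongr; exact hp1 hpos

theorem stmt_9_general {V : Type} [Fintype V] (c p : V → ℝ)
    (hp : ∀ v, 0 ≤ p v) (hp1 : ∀ v, 0 < p v → 1 ≤ p v)
    (Q : ℝ) (hQ : IsLeast {r : ℝ | ∃ v, p v = 0 ∧ r = c v} Q) :
    ∀ lam : ℝ, Q - (⨅ v, c v) ≤ lam → (⨅ v, (c v + lam * p v)) = Q := by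
  intro lam hlam
  obtain ⟨⟨v₀, hv₀p, hv₀c⟩, hQ_le⟩ := hQ
  have hmin : ∀ v, (⨅ v, c v) ≤ c v := ciInf_le (Finite.bddBelow_range c)
  have hlam0 : 0 ≤ lam := by linarith [hmin v₀]
  refine IsLeast.csInf_eq ⟨⟨v₀, by simp [hv₀p, hv₀c]⟩, Set.forall_mem_range.2 fun v => ?_⟩
  exact le_add_mul_of_penalty_zero_or_one_le (hp v) (hp1 v) hlam0 (hmin v) (by linarith)
    fun h => hQ_le ⟨v, h, rfl⟩

theorem stmt_9 {V : Type} [Fintype V] [Nonempty V] (c p : V → ℝ)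
    (hp : ∀ v, 0 ≤ p v) (hp1 : ∀ v, 0 < p v → 1 ≤ p v)
    (Q : ℝ) (hQ : IsLeast {r : ℝ | ∃ v, p v = 0 ∧ r = c v} Q) :
    ∀ lam : ℝ, Q - (⨅ v, c v) ≤ lam → (⨅ v, (c v + lam * p v)) = Q :=
  stmt_9_general c p hp hp1 Q hQ
end

section
/- Let X and U be finite nonempty sets and let L: X × U × ℝ≥0 → ℝ be such that for each (x,u), λ ↦ L(x,u,λ) is non-decreasing, and suppose for each (x,u) there exists a finite λ̄(x,u) ≥ 0 with L(x,u,λ) = L(x,u,λ̄(x,u)) for all λ ≥ λ̄(x,u). Then min_{x ∈ X} max_{u ∈ U} sup_{λ ≥ 0} L(x,u,λ) = sup_{λ ≥ 0} min_{x ∈ X} max_{u ∈ U} L(x,u,λ). -/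
/-!
Since each `λ ↦ L x u λ` is monotone and constant beyond its own saturation point, and there
are only finitely many pairs `(x, u)`, a single multiplier `Λ` beyond all saturation points
attains every supremum over `λ ≥ 0` at once. Both sides of the identity are therefore equal to
`min_x max_u L x u Λ`: on the left because each inner supremum is `L x u Λ`, on the right
because min-max is monotone, so `Λ` also maximises `λ ↦ min_x max_u L x u λ`.
-/

open Set

lemma csSup_setOf_exists_eq_apply_of_forall_le {α β : Type*} [ConditionallyCompleteLattice α]
    {p : β → Prop} {f : β → α} {b : β} (hb : p b) (hle : ∀ a, p a → f a ≤ f b) :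
    sSup {r | ∃ a, p a ∧ r = f a} = f b :=
  IsGreatest.csSup_eq ⟨⟨b, hb, rfl⟩, by rintro r ⟨a, ha, rfl⟩; exact hle a ha⟩

lemma apply_le_apply_of_saturates {f : ℝ → ℝ} (hf : MonotoneOn f (Ici 0)) {lbar : ℝ}
    (hsat : ∀ lam, lbar ≤ lam → f lam = f lbar) {lam Λ : ℝ} (hlam : 0 ≤ lam) (hΛ : lbar ≤ Λ) :
    f lam ≤ f Λ := by
  rcases le_total lam Λ with h | h
  · exact hf hlam (hlam.trans h) h
  · rw [hsat lam (hΛ.trans h), hsat Λ hΛ]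

lemma exists_common_saturation_point {ι : Type*} [Finite ι] {f : ι → ℝ → ℝ}
    (hf : ∀ i, MonotoneOn (f i) (Ici 0))
    (hsat : ∀ i, ∃ lbar, 0 ≤ lbar ∧ ∀ lam, lbar ≤ lam → f i lam = f i lbar) :
    ∃ Λ, 0 ≤ Λ ∧ ∀ i lam, 0 ≤ lam → f i lam ≤ f i Λ := by
  choose lbar _ hlbar using hsat
  obtain ⟨M, hM⟩ := (finite_range lbar).bddAbove
  refine ⟨max M 0, le_max_right _ _, fun i lam hlam => ?_⟩
  exact apply_le_apply_of_saturates (hf i) (hlbar i) hlam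
    ((hM (mem_range_self i)).trans (le_max_left _ _))

lemma ciInf_ciSup_mono {X U : Type*} [Finite X] [Finite U] {g h : X → U → ℝ}
    (hgh : ∀ x u, g x u ≤ h x u) : ⨅ x, ⨆ u, g x u ≤ ⨅ x, ⨆ u, h x u :=
  ciInf_mono (Finite.bddBelow_range _) fun x =>
    ciSup_mono (Finite.bddAbove_range _) (hgh x)

theorem stmt_10_general {X U : Type} [Fintype X] [Fintype U]
    (L : X → U → ℝ → ℝ)
    (hmono : ∀ x u, ∀ a b : ℝ, 0 ≤ a → a ≤ b → L x u a ≤ L x u b)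
    (hsat : ∀ x u, ∃ lbar : ℝ, 0 ≤ lbar ∧ ∀ lam : ℝ, lbar ≤ lam →
        L x u lam = L x u lbar) :
    (⨅ x, ⨆ u, sSup {r : ℝ | ∃ lam : ℝ, 0 ≤ lam ∧ r = L x u lam})
      = sSup {r : ℝ | ∃ lam : ℝ, 0 ≤ lam ∧ r = ⨅ x, ⨆ u, L x u lam} := by
  obtain ⟨Λ, hΛ0, hΛ⟩ := exists_common_saturation_point (f := fun p : X × U => L p.1 p.2)
    (fun p _ ha _ _ hab => hmono p.1 p.2 _ _ ha hab) (fun p => hsat p.1 p.2)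
  have hle : ∀ x u lam, 0 ≤ lam → L x u lam ≤ L x u Λ := fun x u => hΛ (x, u)
  rw [csSup_setOf_exists_eq_apply_of_forall_le hΛ0
    fun lam hlam => ciInf_ciSup_mono fun x u => hle x u lam hlam]
  exact iInf_congr fun x => iSup_congr fun u =>
    csSup_setOf_exists_eq_apply_of_forall_le hΛ0 (hle x u)

theorem stmt_10 {X U : Type} [Fintype X] [Fintype U] [Nonempty X] [Nonempty U]
    (L : X → U → ℝ → ℝ)
    (hmono : ∀ x u, ∀ a b : ℝ, 0 ≤ a → a ≤ b → L x u a ≤ L x u b)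
    (hsat : ∀ x u, ∃ lbar : ℝ, 0 ≤ lbar ∧ ∀ lam : ℝ, lbar ≤ lam →
        L x u lam = L x u lbar) :
    (⨅ x, ⨆ u, sSup {r : ℝ | ∃ lam : ℝ, 0 ≤ lam ∧ r = L x u lam})
      = sSup {r : ℝ | ∃ lam : ℝ, 0 ≤ lam ∧ r = ⨅ x, ⨆ u, L x u lam} :=
  stmt_10_general L hmono hsat
end

section
/- Let V and U be finite nonempty sets, c: U × V → ℝ, p: U × V → ℝ≥0, and L(u,λ) = min_{v ∈ V}(c(u,v) + λ p(u,v)). Suppose λ̄ ≥ 0 maximizes λ ↦ max_{u ∈ U} L(u,λ) over ℝ≥0 and max_{u} L(u,λ̄) is finite. Then there exist ū ∈ argmax_{u ∈ U} L(u,λ̄) and v̄ ∈ argmin_{v ∈ V}(c(ū,v) + λ̄ p(ū,v)) with p(ū,v̄) = 0. -/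
/-!
Suppose every minimiser `v` at every worst-case `u` had `p u v > 0`. At a fixed such `u`, raising
the multiplier strictly above `lbar` leaves the penalty-free costs unchanged (they were strictly
above the minimum) and strictly raises all others, so the finite minimum strictly increases.
Hence the worst-case value strictly increases, contradicting the optimality of `lbar`.
-/

theorem iInf_add_mul_lt_iInf_add_mul {ι : Type*} [Finite ι] [Nonempty ι] {f g : ι → ℝ}
    (hg : ∀ i, 0 ≤ g i) {a b : ℝ} (hab : a < b)
    (hmin : ∀ i, f i + a * g i = ⨅ j, (f j + a * g j) → g i ≠ 0) :
    ⨅ i, (f i + a * g i) < ⨅ i, (f i + b * g i) := by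
  obtain ⟨i, hi⟩ := exists_eq_ciInf_of_finite (f := fun i => f i + b * g i)
  rw [← hi]
  have hle : ⨅ j, (f j + a * g j) ≤ f i + a * g i :=
    ciInf_le (Set.finite_range _).bddBelow i
  by_cases hgi : g i = 0
  · have hlt := lt_of_le_of_ne hle fun h => hmin i h.symm hgi
    simpa [hgi] using hlt
  · have hpos : 0 < g i := lt_of_le_of_ne (hg i) (Ne.symm hgi)
    nlinarith

theorem stmt_12_general {V U : Type} [Fintype V] [Fintype U] [Nonempty V] [Nonempty U]
    (c p : U → V → ℝ) (hp : ∀ u v, 0 ≤ p u v)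
    (lbar : ℝ)
    (hopt : ∀ lam : ℝ, 0 ≤ lam →
      (⨆ u, ⨅ v, (c u v + lam * p u v)) ≤ ⨆ u, ⨅ v, (c u v + lbar * p u v)) :
    ∃ ubar : U, (⨅ v, (c ubar v + lbar * p ubar v)) = (⨆ u, ⨅ v, (c u v + lbar * p u v)) ∧
      ∃ vbar : V, (c ubar vbar + lbar * p ubar vbar) = (⨅ v, (c ubar v + lbar * p ubar v)) ∧
        p ubar vbar = 0 := by
  by_contra! hcon
  obtain ⟨ubar, hubar⟩ := exists_eq_ciSup_of_finite (f := fun u => ⨅ v, (c u v + lbar * p u v))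
  set lam := |lbar| + 1
  have hlt : ⨅ v, (c ubar v + lbar * p ubar v) < ⨅ v, (c ubar v + lam * p ubar v) :=
    iInf_add_mul_lt_iInf_add_mul (hp ubar) (by linarith [le_abs_self lbar]) (hcon ubar hubar)
  have hle : ⨅ v, (c ubar v + lam * p ubar v) ≤ ⨆ u, ⨅ v, (c u v + lam * p u v) :=
    le_ciSup (f := fun u => ⨅ v, (c u v + lam * p u v)) (Set.finite_range _).bddAbove ubar
  have hopt_lam := hopt lam (by positivity)
  rw [← hubar] at hopt_lam
  linarith

theorem stmt_12 {V U : Type} [Fintype V] [Fintype U] [Nonempty V] [Nonempty U]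
    (c p : U → V → ℝ) (hp : ∀ u v, 0 ≤ p u v)
    (lbar : ℝ) (hlbar : 0 ≤ lbar)
    (hopt : ∀ lam : ℝ, 0 ≤ lam →
      (⨆ u, ⨅ v, (c u v + lam * p u v)) ≤ ⨆ u, ⨅ v, (c u v + lbar * p u v)) :
    ∃ ubar : U, (⨅ v, (c ubar v + lbar * p ubar v)) = (⨆ u, ⨅ v, (c u v + lbar * p u v)) ∧
      ∃ vbar : V, (c ubar vbar + lbar * p ubar vbar) = (⨅ v, (c ubar v + lbar * p ubar v)) ∧
        p ubar vbar = 0 :=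
  stmt_12_general c p hp lbar hopt
end

section
/- Let S(ξ) = min{ e^⊤σ + φ(z,ξ) : y ∈ Y, z ∈ [0,1]^{n_p}, σ ∈ ℝ^m_{≥0}, T x + W y + σ ≥ h(z) }, where Y is nonempty, φ(z,ξ) = e^⊤z + e^⊤ξ − 2z^⊤ξ, and ξ ∈ {0,1}^{n_p}. Then S(ξ) ≥ 0, and S(ξ) = 0 if and only if there exists y ∈ Y with T x + W y ≥ h(ξ). -/
/-! For `z ∈ [0,1]ⁿ` and binary `ξ`, the penalty `φ(z, ξ) = eᵀz + eᵀξ − 2zᵀξ` is the `ℓ¹` distance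
`∑ |zⱼ − ξⱼ|`. Every objective value is therefore a sum of nonnegative terms, and it vanishes
exactly when `σ = 0` and `z = ξ`, i.e. when `y` is feasible for `T x + W y ≥ h(ξ)` without slack. -/

open Finset

lemma add_sub_two_mul_eq_abs_sub {a b : ℝ} (ha : a ∈ Set.Icc 0 1) (hb : b = 0 ∨ b = 1) :
    a + b - 2 * (a * b) = |a - b| := by
  rcases hb with rfl | rfl
  · simp [abs_of_nonneg ha.1]
  · rw [abs_sub_comm, abs_of_nonneg (by linarith [ha.2])]
    ring

lemma sum_add_sum_sub_two_mul_sum_eq_sum_abs_sub {ι : Type*} [Fintype ι] {z ξ : ι → ℝ}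
    (hz : ∀ j, z j ∈ Set.Icc 0 1) (hξ : ∀ j, ξ j = 0 ∨ ξ j = 1) :
    (∑ j, z j) + (∑ j, ξ j) - 2 * ∑ j, z j * ξ j = ∑ j, |z j - ξ j| := by
  rw [mul_sum, ← sum_add_distrib, ← sum_sub_distrib]
  exact sum_congr rfl fun j _ => add_sub_two_mul_eq_abs_sub (hz j) (hξ j)

section SlackPlusDistance

variable {ι κ : Type*} [Fintype ι] [Fintype κ] {σ : κ → ℝ}

lemma sum_add_sum_abs_sub_nonneg (hσ : ∀ i, 0 ≤ σ i) (z ξ : ι → ℝ) :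
    0 ≤ (∑ i, σ i) + ∑ j, |z j - ξ j| :=
  add_nonneg (sum_nonneg fun i _ => hσ i) (sum_nonneg fun _ _ => abs_nonneg _)

lemma sum_add_sum_abs_sub_eq_zero_iff (hσ : ∀ i, 0 ≤ σ i) {z ξ : ι → ℝ} :
    (∑ i, σ i) + ∑ j, |z j - ξ j| = 0 ↔ σ = 0 ∧ z = ξ := by
  rw [add_eq_zero_iff_of_nonneg (sum_nonneg fun i _ => hσ i) (sum_nonneg fun _ _ => abs_nonneg _),
    sum_eq_zero_iff_of_nonneg fun i _ => hσ i, sum_eq_zero_iff_of_nonneg fun _ _ => abs_nonneg _]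
  simp only [mem_univ, true_implies, abs_eq_zero, sub_eq_zero, funext_iff, Pi.zero_apply]

end SlackPlusDistance

theorem stmt_15_general (n1 n2 np m : ℕ) (Y : Set (Fin n2 → ℝ))
    (x : Fin n1 → ℝ) (T : Fin m → Fin n1 → ℝ) (W : Fin m → Fin n2 → ℝ)
    (h : (Fin np → ℝ) → Fin m → ℝ)
    (ξ : Fin np → ℝ) (hξ : ∀ j, ξ j = 0 ∨ ξ j = 1)
    (S : ℝ)
    (hS : IsLeast {r : ℝ | ∃ y ∈ Y, ∃ z : Fin np → ℝ, ∃ σ : Fin m → ℝ,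
        (∀ j, 0 ≤ z j ∧ z j ≤ 1) ∧ (∀ i, 0 ≤ σ i) ∧
        (∀ i, h z i ≤ (∑ k, T i k * x k) + (∑ k, W i k * y k) + σ i) ∧
        r = (∑ i, σ i) + ((∑ j, z j) + (∑ j, ξ j) - 2 * ∑ j, z j * ξ j)} S) :
    0 ≤ S ∧ (S = 0 ↔
      ∃ y ∈ Y, ∀ i, h ξ i ≤ (∑ k, T i k * x k) + ∑ k, W i k * y k) := by
  obtain ⟨hmem, hlb⟩ := hS
  have hφ (z : Fin np → ℝ) (hz : ∀ j, z j ∈ Set.Icc 0 1) :=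
    sum_add_sum_sub_two_mul_sum_eq_sum_abs_sub hz hξ
  have hS0 : 0 ≤ S := by
    obtain ⟨y, -, z, σ, hz, hσ, -, rfl⟩ := hmem
    rw [hφ z hz]
    exact sum_add_sum_abs_sub_nonneg hσ z ξ
  refine ⟨hS0, fun hS => ?_, fun ⟨y, hy, hfeas⟩ => le_antisymm (hlb ?_) hS0⟩
  · obtain ⟨y, hy, z, σ, hz, hσ, hc, hval⟩ := hmem
    rw [hφ z hz, hS, eq_comm, sum_add_sum_abs_sub_eq_zero_iff hσ] at hval
    obtain ⟨rfl, rfl⟩ := hval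
    exact ⟨y, hy, fun i => by simpa using hc i⟩
  · have hξ01 (j : Fin np) : ξ j ∈ Set.Icc 0 1 := by rcases hξ j with hj | hj <;> simp [hj]
    refine ⟨y, hy, ξ, 0, hξ01, fun _ => le_rfl, fun i => by simpa using hfeas i, ?_⟩
    simp [hφ ξ hξ01]

theorem stmt_15 (n1 n2 np m : ℕ) (Y : Set (Fin n2 → ℝ)) (hY : Y.Nonempty)
    (x : Fin n1 → ℝ) (T : Fin m → Fin n1 → ℝ) (W : Fin m → Fin n2 → ℝ)
    (h0 : Fin m → ℝ) (H : Fin m → Fin np → ℝ) (h : (Fin np → ℝ) → Fin m → ℝ)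
    (hh : ∀ z i, h z i = h0 i + ∑ j, H i j * z j)
    (ξ : Fin np → ℝ) (hξ : ∀ j, ξ j = 0 ∨ ξ j = 1)
    (S : ℝ)
    (hS : IsLeast {r : ℝ | ∃ y ∈ Y, ∃ z : Fin np → ℝ, ∃ σ : Fin m → ℝ,
        (∀ j, 0 ≤ z j ∧ z j ≤ 1) ∧ (∀ i, 0 ≤ σ i) ∧
        (∀ i, h z i ≤ (∑ k, T i k * x k) + (∑ k, W i k * y k) + σ i) ∧
        r = (∑ i, σ i) + ((∑ j, z j) + (∑ j, ξ j) - 2 * ∑ j, z j * ξ j)} S) :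
    0 ≤ S ∧ (S = 0 ↔
      ∃ y ∈ Y, ∀ i, h ξ i ≤ (∑ k, T i k * x k) + ∑ k, W i k * y k) :=
  stmt_15_general n1 n2 np m Y x T W h ξ hξ S hS
end
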